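/- arXiv:2410.14199 — 7 statements merged into one kernel-verified Lean document; each statement's English description precedes it below -/
import Mathlib

section
/- For every permutation σ of {1,...,n}, the number of descents of σ equals the number of ascents of its Lehmer code L(σ). Consequently, the n-th Eulerian polynomial A_n(t) = Σ_{σ ∈ S_n} t^{des(σ)} satisfies A_n(t) = Σ_{e ∈ I_n} t^{asc(e)}, where I_n is the set of n-inversion sequences. -/
/-- The Lehmer code of a permutation of `Fin n` (0-indexed). -/
def lehmer {n : ℕ} (σ : Equiv.Perm (Fin n)) : ℕ → ℕ := fun i =>
  if h : i < n then
    (Finset.univ.filter (fun j : Fin n => (j : ℕ) < i ∧ σ ⟨i, h⟩ < σ j)).card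
  else 0

/-- A permutation of `Fin n` as a function `ℕ → ℕ` (0 outside range). -/
def toFun {n : ℕ} (σ : Equiv.Perm (Fin n)) : ℕ → ℕ := fun i =>
  if h : i < n then (σ ⟨i, h⟩ : ℕ) else 0

/-- Number of ascents of a length-`n` sequence (0-indexed positions `0,...,n-2`). -/
def ascN (n : ℕ) (f : ℕ → ℕ) : ℕ :=
  ((Finset.range (n - 1)).filter (fun i => f i < f (i + 1))).card

/-- Number of descents of a length-`n` sequence (0-indexed positions `0,...,n-2`). -/
def desN (n : ℕ) (f : ℕ → ℕ) : ℕ :=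
  ((Finset.range (n - 1)).filter (fun i => f (i + 1) < f i)).card

/-- The Finset of `n`-inversion sequences, as functions `Fin n → ℕ` with `e i ≤ i`. -/
def invSeqs (n : ℕ) : Finset (Fin n → ℕ) :=
  Fintype.piFinset (fun i => Finset.range (i.1 + 1))

/-- Extension of `e : Fin n → ℕ` to `ℕ → ℕ` by zero. -/
def ext {n : ℕ} (e : Fin n → ℕ) : ℕ → ℕ := fun i =>
  if h : i < n then e ⟨i, h⟩ else 0

/-!
If `σ (i+1) < σ i`, then every `j < i` counted by the code at `i` is also counted at `i+1`, and so
is `i` itself; if `σ i < σ (i+1)`, everything counted at `i+1` is already counted at `i`. Hence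
descents of `σ` are exactly the ascents of its code. The code is injective, since `σ` can be
rebuilt from right to left, and there are `n!` inversion sequences, so `σ ↦ L(σ)` is a bijection
onto them and transports `t ^ des` to `t ^ asc`.
-/

open Finset in
lemma strictAntiOn_card_Ioi_sdiff {α : Type*} [LinearOrder α] [LocallyFiniteOrderTop α]
    [DecidableEq α] (T : Finset α) : StrictAntiOn (fun a => #(Ioi a \ T)) (↑T)ᶜ :=
  fun a _ b hb hab => card_lt_card <|
    (ssubset_iff_of_subset (sdiff_subset_sdiff (Ioi_subset_Ioi hab.le) le_rfl)).2
      ⟨b, by simpa [hab] using hb⟩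

section Lehmer

open Finset

variable {n : ℕ}

lemma lehmer_apply (σ : Equiv.Perm (Fin n)) (i : Fin n) :
    lehmer σ i = #{j ∈ Iio i | σ i < σ j} := by
  rw [lehmer, dif_pos i.2]
  congr 1
  ext j
  simp only [mem_filter, mem_univ, mem_Iio, true_and, Fin.eta, Fin.lt_def]

lemma lehmer_le (σ : Equiv.Perm (Fin n)) (i : Fin n) : lehmer σ i ≤ i := by
  rw [lehmer_apply, ← Fin.card_Iio i]
  exact card_filter_le _ _

lemma lehmer_lt_lehmer_succ_iff (σ : Equiv.Perm (Fin n)) {i : ℕ} (h : i + 1 < n) :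
    lehmer σ i < lehmer σ (i + 1) ↔ σ ⟨i + 1, h⟩ < σ ⟨i, by omega⟩ := by
  set a : Fin n := ⟨i, by omega⟩
  set b : Fin n := ⟨i + 1, h⟩
  have hIio : Iio b = insert a (Iio a) := by
    ext j
    simp only [mem_Iio, mem_insert, Fin.lt_def, Fin.ext_iff, a, b]
    omega
  have hab : σ a ≠ σ b := σ.injective.ne (by simp [a, b, Fin.ext_iff])
  rw [show (i : ℕ) = a from rfl, show i + 1 = (b : ℕ) from rfl, lehmer_apply, lehmer_apply]
  constructor
  · contrapose!
    intro hle
    have hab : σ a < σ b := lt_of_le_of_ne hle hab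
    refine card_le_card fun j hj => ?_
    simp only [hIio, mem_filter, mem_insert] at hj ⊢
    obtain ⟨rfl | hj, hbj⟩ := hj
    · exact absurd hbj (lt_asymm hab)
    · exact ⟨hj, hab.trans hbj⟩
  · intro hba
    rw [hIio, filter_insert, if_pos hba, card_insert_of_notMem (by simp)]
    refine Nat.lt_succ_of_le (card_le_card fun j hj => ?_)
    simp only [mem_filter] at hj ⊢
    exact ⟨hj.1, hba.trans hj.2⟩

lemma desN_toFun_eq_ascN_lehmer (σ : Equiv.Perm (Fin n)) :
    desN n (toFun σ) = ascN n (lehmer σ) := by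
  unfold desN ascN
  congr 1
  refine filter_congr fun i hi => ?_
  have h : i + 1 < n := by rw [mem_range] at hi; omega
  rw [lehmer_lt_lehmer_succ_iff σ h, toFun, toFun, dif_pos h, dif_pos (by omega), Fin.val_fin_lt]

lemma lehmer_eq_card_Ioi_sdiff (σ : Equiv.Perm (Fin n)) (i : Fin n) :
    lehmer σ i = #(Ioi (σ i) \ (Ioi i).map σ.toEmbedding) := by
  rw [lehmer_apply, ← card_map σ.toEmbedding]
  congr 1
  ext w
  obtain ⟨j, rfl⟩ := σ.surjective w
  simp only [mem_map_equiv, mem_filter, mem_Iio, mem_sdiff, mem_Ioi, Equiv.symm_apply_apply]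
  constructor
  · rintro ⟨hji, hσ⟩
    exact ⟨hσ, not_lt.2 hji.le⟩
  · rintro ⟨hσ, hij⟩
    exact ⟨lt_of_le_of_ne (not_lt.1 hij) (ne_of_apply_ne σ hσ.ne'), hσ⟩

def lehmerCode (σ : Equiv.Perm (Fin n)) : Fin n → ℕ := fun i => lehmer σ i

/-- A permutation is recovered from its Lehmer code from right to left: once `σ` is known
on `Ioi i`, the value `σ i` is the unique value outside `σ '' Ioi i` having exactly
`lehmer σ i` such values above it. -/
lemma lehmerCode_injective : Function.Injective (lehmerCode (n := n)) := by
  intro σ τ h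
  ext i : 1
  induction i using WellFoundedGT.induction with
  | _ i ih =>
  have hT : (Ioi i).map σ.toEmbedding = (Ioi i).map τ.toEmbedding := by
    simp only [map_eq_image]
    exact image_congr fun j hj => ih j (mem_Ioi.1 hj)
  have hσ : σ i ∉ (Ioi i).map σ.toEmbedding := by simp
  have hτ : τ i ∉ (Ioi i).map σ.toEmbedding := by rw [hT]; simp
  have hcode := congrFun h i
  simp only [lehmerCode, lehmer_eq_card_Ioi_sdiff, ← hT] at hcode
  exact (strictAntiOn_card_Ioi_sdiff _).injOn hσ hτ hcode

lemma lehmerCode_mem_invSeqs (σ : Equiv.Perm (Fin n)) : lehmerCode σ ∈ invSeqs n :=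
  Fintype.mem_piFinset.2 fun i => mem_range.2 (Nat.lt_succ_of_le (lehmer_le σ i))

lemma ext_lehmerCode (σ : Equiv.Perm (Fin n)) : _root_.ext (lehmerCode σ) = lehmer σ := by
  funext i
  by_cases h : i < n
  · simp [_root_.ext, lehmerCode, h]
  · simp [_root_.ext, lehmer, h]

lemma card_invSeqs (n : ℕ) : #(invSeqs n) = n.factorial := by
  rw [invSeqs, Fintype.card_piFinset]
  simp only [card_range]
  rw [Fin.prod_univ_eq_prod_range (· + 1), prod_range_add_one_eq_factorial]

lemma image_lehmerCode (n : ℕ) : univ.image (lehmerCode (n := n)) = invSeqs n :=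
  eq_of_subset_of_card_le (image_subset_iff.2 fun σ _ => lehmerCode_mem_invSeqs σ) <| by
    rw [card_invSeqs, card_image_of_injective _ lehmerCode_injective, card_univ,
      Fintype.card_perm, Fintype.card_fin]

end Lehmer

/-- The number of descents of `σ` equals the number of ascents of its Lehmer code;
consequently the Eulerian polynomial `A_n(t) = Σ_σ t^{des σ}` equals
`Σ_{e ∈ I_n} t^{asc e}`. -/
theorem stmt1 (n : ℕ) :
    (∀ σ : Equiv.Perm (Fin n), desN n (toFun σ) = ascN n (lehmer σ)) ∧
    ∑ σ : Equiv.Perm (Fin n), (Polynomial.X : Polynomial ℚ) ^ desN n (toFun σ)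
      = ∑ e ∈ invSeqs n, (Polynomial.X : Polynomial ℚ) ^ ascN n (ext e) := by
  refine ⟨desN_toFun_eq_ascN_lehmer, ?_⟩
  rw [← image_lehmerCode, Finset.sum_image fun σ _ τ _ h => lehmerCode_injective h]
  simp only [ext_lehmerCode, desN_toFun_eq_ascN_lehmer]
end

section
/- Let E be a finite linearly ordered set, σ a bijection from {1,...,n} to E (n = |E|), and let i < j be two descents of σ. Define S(σ,k) = { σ(l) : l ≥ k, σ(l) ≤ σ(k) }. Then S(σ,i) is an initial segment of S(σ,i) ∪ S(σ,j), i.e. every element of S(σ,i) ∪ S(σ,j) that is ≤ max S(σ,i) belongs to S(σ,i). -/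
/-- `S(σ, i) = { σ l : l ≥ i, σ l ≤ σ i }` as a Finset. -/
def sSet {E : Type*} [LinearOrder E] {n : ℕ} (σ : Fin n → E) (i : Fin n) : Finset E :=
  Finset.image σ (Finset.univ.filter (fun l => i ≤ l ∧ σ l ≤ σ i))

section sSet

variable {E : Type*} [LinearOrder E] {n : ℕ} {σ : Fin n → E} {i j : Fin n} {x : E}

theorem mem_sSet : x ∈ sSet σ i ↔ ∃ l, (i ≤ l ∧ σ l ≤ σ i) ∧ σ l = x := by
  simp only [sSet, Finset.mem_image, Finset.mem_filter, Finset.mem_univ, true_and]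

theorem self_mem_sSet : σ i ∈ sSet σ i :=
  mem_sSet.2 ⟨i, ⟨le_rfl, le_rfl⟩, rfl⟩

theorem le_of_mem_sSet (hx : x ∈ sSet σ i) : x ≤ σ i := by
  obtain ⟨l, ⟨_, hl⟩, rfl⟩ := mem_sSet.1 hx
  exact hl

theorem mem_sSet_of_mem_sSet_of_le (hij : i ≤ j) (hx : x ∈ sSet σ j) (hxi : x ≤ σ i) :
    x ∈ sSet σ i := by
  obtain ⟨l, ⟨hjl, _⟩, rfl⟩ := mem_sSet.1 hx
  exact mem_sSet.2 ⟨l, ⟨hij.trans hjl, hxi⟩, rfl⟩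

end sSet

theorem stmt4_general {E : Type*} [LinearOrder E] {n : ℕ}
    (σ : Fin n → E) (i j : Fin n) (hij : i < j) :
    σ i ∈ sSet σ i ∧ (∀ x ∈ sSet σ i, x ≤ σ i) ∧
    ∀ x ∈ sSet σ i ∪ sSet σ j, x ≤ σ i → x ∈ sSet σ i := by
  refine ⟨self_mem_sSet, fun _ => le_of_mem_sSet, fun x hx hxi => ?_⟩
  rcases Finset.mem_union.1 hx with hx | hx
  · exact hx
  · exact mem_sSet_of_mem_sSet_of_le hij.le hx hxi

/-- If `i < j` are two descents of a bijection `σ : Fin n → E` (`E` a finite linear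
order), then `σ i` is the maximum of `S(σ,i)` and `S(σ,i)` is an initial segment of
`S(σ,i) ∪ S(σ,j)`: every element of the union that is `≤ max S(σ,i)` lies in `S(σ,i)`. -/
theorem stmt4 {E : Type*} [Fintype E] [LinearOrder E] {n : ℕ}
    (σ : Fin n → E) (hσ : Function.Bijective σ) (i j : Fin n) (hij : i < j)
    (hi : (i : ℕ) + 1 < n) (hj : (j : ℕ) + 1 < n)
    (hdi : σ ⟨(i : ℕ) + 1, hi⟩ < σ i) (hdj : σ ⟨(j : ℕ) + 1, hj⟩ < σ j) :
    σ i ∈ sSet σ i ∧ (∀ x ∈ sSet σ i, x ≤ σ i) ∧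
    ∀ x ∈ sSet σ i ∪ sSet σ j, x ≤ σ i → x ∈ sSet σ i :=
  stmt4_general σ i j hij
end

section
/- Let V be a collection of subsets of a finite linearly ordered set E, each of cardinality at least 2, such that for any two distinct S_1, S_2 ∈ V, either S_1 ◁ S_2 or S_2 ◁ S_1, where S_1 ◁ S_2 means: S_1 is an initial segment of S_1 ∪ S_2 and (S_1 \ {max S_1}) ∪ S_2 is strictly contained in S_1 ∪ S_2. Then the relation ◁ is a strict total order on V. -/
/-!
`S ◁ T` says exactly that `T` meets `{x ≤ max S}` only inside `S` and misses `max S`.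
Comparing maxima, `S ◁ T ◁ U` gives `S ◁ U` as soon as `max S ≤ max T`; since some consecutive
pair of a cycle `S ◁ T ◁ U ◁ S` has increasing maxima, a 3-cycle would collapse into a 2-cycle,
which the missing maximum forbids. Totality then turns the absence of 3-cycles into transitivity.
-/

/-- `S ◁ T`: `S` is nonempty, `S` is an initial segment of `S ∪ T` (every element of
`S ∪ T` that is `≤ max S` lies in `S`), and `(S \ {max S}) ∪ T ⊊ S ∪ T`.
The maximum of `S` is encoded as any `m ∈ S` that is an upper bound of `S`. -/
def Tri {E : Type*} [LinearOrder E] (S T : Finset E) : Prop :=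
  S.Nonempty ∧ ∀ m ∈ S, (∀ y ∈ S, y ≤ m) →
    (∀ x ∈ S ∪ T, x ≤ m → x ∈ S) ∧ S.erase m ∪ T ⊂ S ∪ T

open Finset

theorem Finset.erase_union_ssubset_union_iff {α : Type*} [DecidableEq α] {s t : Finset α}
    {a : α} (ha : a ∈ s) : s.erase a ∪ t ⊂ s ∪ t ↔ a ∉ t := by
  rw [ssubset_iff_of_subset (union_subset_union (erase_subset a s) subset_rfl)]
  constructor
  · rintro ⟨x, hx, hxt⟩ hat
    apply hxt
    by_cases hxa : x = a <;> simp_all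
  · intro hat
    exact ⟨a, mem_union_left _ ha, by simp [hat]⟩

section

variable {E : Type*} [LinearOrder E] {S T U : Finset E} {x : E}

theorem tri_iff : Tri S T ↔
    ∃ hS : S.Nonempty, (∀ x ∈ T, x ≤ S.max' hS → x ∈ S) ∧ S.max' hS ∉ T := by
  constructor
  · rintro ⟨hS, h⟩
    obtain ⟨hinit, hssub⟩ := h _ (S.max'_mem hS) (S.le_max' · ·)
    exact ⟨hS, fun x hx => hinit x (mem_union_right _ hx),
      (erase_union_ssubset_union_iff (S.max'_mem hS)).1 hssub⟩
  · rintro ⟨hS, hinit, hmax⟩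
    refine ⟨hS, fun m hm hub => ?_⟩
    obtain rfl : m = S.max' hS := le_antisymm (S.le_max' m hm) (hub _ (S.max'_mem hS))
    exact ⟨fun x hx hle => (mem_union.1 hx).elim id (hinit x · hle),
      (erase_union_ssubset_union_iff hm).2 hmax⟩

namespace Tri

theorem nonempty (h : Tri S T) : S.Nonempty := h.1

theorem mem_of_le (h : Tri S T) (hx : x ∈ T) (hle : x ≤ S.max' h.nonempty) : x ∈ S :=
  (tri_iff.1 h).2.1 x hx hle

theorem max'_notMem (h : Tri S T) : S.max' h.nonempty ∉ T :=
  (tri_iff.1 h).2.2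

theorem irrefl : ¬ Tri S S :=
  fun h => h.max'_notMem (S.max'_mem _)

theorem asymm (h : Tri S T) : ¬ Tri T S := fun h' => by
  rcases le_total (S.max' h.nonempty) (T.max' h'.nonempty) with hle | hle
  · exact h.max'_notMem (h'.mem_of_le (S.max'_mem _) hle)
  · exact h'.max'_notMem (h.mem_of_le (T.max'_mem _) hle)

theorem trans_of_max'_le (h₁ : Tri S T) (h₂ : Tri T U)
    (hle : S.max' h₁.nonempty ≤ T.max' h₂.nonempty) : Tri S U :=
  tri_iff.2 ⟨h₁.nonempty,
    fun _ hx hxle => h₁.mem_of_le (h₂.mem_of_le hx (hxle.trans hle)) hxle,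
    fun hmax => h₁.max'_notMem (h₂.mem_of_le hmax hle)⟩

theorem not_tri_of_tri (h₁ : Tri S T) (h₂ : Tri T U) : ¬ Tri U S := fun h₃ => by
  rcases le_or_gt (S.max' h₁.nonempty) (T.max' h₂.nonempty) with h₁₂ | h₂₁
  · exact (h₁.trans_of_max'_le h₂ h₁₂).asymm h₃
  rcases le_or_gt (T.max' h₂.nonempty) (U.max' h₃.nonempty) with h₂₃ | h₃₂
  · exact (h₂.trans_of_max'_le h₃ h₂₃).asymm h₁
  · exact (h₃.trans_of_max'_le h₁ (h₃₂.trans h₂₁).le).asymm h₂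

end Tri

end

theorem stmt6_general {E : Type*} [LinearOrder E] (V : Finset (Finset E))
    (htot : ∀ S₁ ∈ V, ∀ S₂ ∈ V, S₁ ≠ S₂ → Tri S₁ S₂ ∨ Tri S₂ S₁) :
    (∀ S ∈ V, ¬ Tri S S) ∧
    (∀ S₁ ∈ V, ∀ S₂ ∈ V, ¬(Tri S₁ S₂ ∧ Tri S₂ S₁)) ∧
    (∀ S₁ ∈ V, ∀ S₂ ∈ V, ∀ S₃ ∈ V, Tri S₁ S₂ → Tri S₂ S₃ → Tri S₁ S₃) := by
  refine ⟨fun _ _ => Tri.irrefl, fun _ _ _ _ h => h.1.asymm h.2, ?_⟩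
  intro S₁ hS₁ S₂ _ S₃ hS₃ h₁₂ h₂₃
  have hne : S₁ ≠ S₃ := by
    rintro rfl
    exact h₁₂.asymm h₂₃
  exact (htot S₁ hS₁ S₃ hS₃ hne).resolve_right (h₁₂.not_tri_of_tri h₂₃)

/-- If `V` is a collection of subsets of a finite linear order, each of cardinality at
least 2, such that any two distinct members are comparable under `◁`, then `◁` is a
strict total order on `V` (irreflexive, asymmetric and transitive). -/
theorem stmt6 {E : Type*} [Fintype E] [LinearOrder E] (V : Finset (Finset E))
    (hcard : ∀ S ∈ V, 2 ≤ S.card)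
    (htot : ∀ S₁ ∈ V, ∀ S₂ ∈ V, S₁ ≠ S₂ → Tri S₁ S₂ ∨ Tri S₂ S₁) :
    (∀ S ∈ V, ¬ Tri S S) ∧
    (∀ S₁ ∈ V, ∀ S₂ ∈ V, ¬(Tri S₁ S₂ ∧ Tri S₂ S₁)) ∧
    (∀ S₁ ∈ V, ∀ S₂ ∈ V, ∀ S₃ ∈ V, Tri S₁ S₂ → Tri S₂ S₃ → Tri S₁ S₃) :=
  stmt6_general V htot
end

section
/- Let E be a finite linearly ordered set and S_1 ⊋ S_2 ⊋ S_3 nonempty subsets with S_1 ◁ S_2 and S_2 ◁ S_3 (where S ◁ T means S is an initial segment of S ∪ T and (S \ {max S}) ∪ T ⊊ S ∪ T). Then S_1 ◁ S_3. -/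
/-! The relation `S ◁ T` is antitone in `T`: the strict inclusion `(S \ {max S}) ∪ T ⊊ S ∪ T`
just says `max S ∉ T`, and the initial-segment condition only weakens as `T` shrinks.
So `S₁ ◁ S₃` already follows from `S₁ ◁ S₂` and `S₃ ⊆ S₂`. -/

namespace Tri

variable {E : Type*} [LinearOrder E] {S T T' : Finset E} {m : E}

theorem max_notMem_right (h : Tri S T) (hm : m ∈ S) (hmax : ∀ y ∈ S, y ≤ m) : m ∉ T :=
  fun hmT => (h.2 m hm hmax).2.ne (Finset.erase_union_of_mem hmT S)

theorem mono_right (h : Tri S T) (hT : T' ⊆ T) : Tri S T' := by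
  refine ⟨h.1, fun m hm hmax => ⟨fun x hx hxm => ?_, ?_⟩⟩
  · exact (h.2 m hm hmax).1 x (Finset.union_subset_union_right hT hx) hxm
  · have hmT' : m ∉ T' := fun hmT' => h.max_notMem_right hm hmax (hT hmT')
    refine (Finset.union_subset_union_left (S.erase_subset m)).ssubset_of_not_subset
      fun hsub => ?_
    simpa [hmT'] using hsub (Finset.mem_union_left T' hm)

end Tri

theorem stmt8_general {E : Type*} [LinearOrder E] (S₁ S₂ S₃ : Finset E)
    (h32 : S₃ ⊂ S₂)
    (h12 : Tri S₁ S₂) : Tri S₁ S₃ :=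
  h12.mono_right h32.subset

/-- If `S₁ ⊋ S₂ ⊋ S₃` are nonempty with `S₁ ◁ S₂` and `S₂ ◁ S₃`, then `S₁ ◁ S₃`. -/
theorem stmt8 {E : Type*} [Fintype E] [LinearOrder E] (S₁ S₂ S₃ : Finset E)
    (h₃ : S₃.Nonempty) (h21 : S₂ ⊂ S₁) (h32 : S₃ ⊂ S₂)
    (h12 : Tri S₁ S₂) (h23 : Tri S₂ S₃) : Tri S₁ S₃ :=
  stmt8_general S₁ S₂ S₃ h32 h12
end

section
/- Let n ≥ 2 and let e be an n-inversion sequence with e_n = 0. Define g_n(e) by (g_n(e))_1 = 0 and (g_n(e))_k = e_{k−1} + 1 for 2 ≤ k ≤ n. Then g_n(e) is an n-inversion sequence and asc(g_n(e)) = asc((e_1,...,e_{n−1})) + 1 if n ≥ 2 (the shift creates exactly one new ascent at position 1, and preserves all ascents of (e_1,...,e_{n−1})). -/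
/-! Prepending `0` to `e + 1` keeps every ascent of `e` (adding `1` is strictly monotone) and adds
the ascent `0 < e₀ + 1` at the front. -/

/-- `e` is an `n`-inversion sequence (0-indexed): `e i ≤ i` for `i < n`, zero beyond. -/
def IsInvSeq (n : ℕ) (e : ℕ → ℕ) : Prop :=
  (∀ i < n, e i ≤ i) ∧ ∀ i, n ≤ i → e i = 0

/-- The paper's `g_n(e)`, in 0-indexed form. -/
def shiftInvSeq (n : ℕ) (e : ℕ → ℕ) : ℕ → ℕ :=
  fun k => if 1 ≤ k ∧ k < n then e (k - 1) + 1 else 0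

theorem IsInvSeq.shiftInvSeq {n : ℕ} {e : ℕ → ℕ} (he : IsInvSeq n e) :
    IsInvSeq n (shiftInvSeq n e) := by
  refine ⟨fun i hi => ?_, fun i hi => if_neg (by omega)⟩
  unfold _root_.shiftInvSeq
  split_ifs with h
  · have := he.1 (i - 1) (by omega)
    omega
  · exact Nat.zero_le i

theorem shiftInvSeq_succ {n : ℕ} (e : ℕ → ℕ) {i : ℕ} (hi : i + 1 < n) :
    shiftInvSeq n e (i + 1) = e i + 1 :=
  if_pos ⟨Nat.le_add_left 1 i, hi⟩

theorem ascN_congr {n : ℕ} {f g : ℕ → ℕ} (h : ∀ i < n, f i = g i) : ascN n f = ascN n g := by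
  unfold ascN
  congr 1
  refine Finset.filter_congr fun i hi => ?_
  rw [Finset.mem_range] at hi
  rw [h i (by omega), h (i + 1) (by omega)]

theorem ascN_comp_strictMono (n : ℕ) (f : ℕ → ℕ) {φ : ℕ → ℕ} (hφ : StrictMono φ) :
    ascN n (φ ∘ f) = ascN n f := by
  simp only [ascN, Function.comp_apply, hφ.lt_iff_lt]

theorem ascN_add_two (m : ℕ) (f : ℕ → ℕ) :
    ascN (m + 2) f = ascN (m + 1) (fun i => f (i + 1)) + if f 0 < f 1 then 1 else 0 := by
  simp only [ascN, Finset.card_filter, Nat.add_sub_cancel]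
  exact Finset.sum_range_succ' _ m

theorem stmt12_general (n : ℕ) (hn : 2 ≤ n) (e : ℕ → ℕ) (he : IsInvSeq n e) :
    IsInvSeq n (fun k => if 1 ≤ k ∧ k < n then e (k - 1) + 1 else 0) ∧
    ascN n (fun k => if 1 ≤ k ∧ k < n then e (k - 1) + 1 else 0)
      = ascN (n - 1) e + 1 := by
  refine ⟨he.shiftInvSeq, ?_⟩
  obtain ⟨m, rfl⟩ : ∃ m, n = m + 2 := ⟨n - 2, by omega⟩
  have htail : ascN (m + 1) (fun i => shiftInvSeq (m + 2) e (i + 1)) = ascN (m + 1) e := by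
    rw [ascN_congr (g := (· + 1) ∘ e) fun i hi => shiftInvSeq_succ e (by omega)]
    exact ascN_comp_strictMono _ _ fun _ _ => Nat.succ_lt_succ
  have hfirst : shiftInvSeq (m + 2) e 0 < shiftInvSeq (m + 2) e 1 := by
    rw [shiftInvSeq_succ e (by omega)]
    exact Nat.succ_pos _
  change ascN (m + 2) (shiftInvSeq (m + 2) e) = ascN (m + 1) e + 1
  rw [ascN_add_two, htail, if_pos hfirst]

/-- For an `n`-inversion sequence `e` with last entry `0`, the shifted sequence
`g` with `g 0 = 0` and `g k = e (k-1) + 1` for `1 ≤ k ≤ n-1` is again an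
`n`-inversion sequence, and `asc g = asc (e_1, ..., e_{n-1}) + 1`. -/
theorem stmt12 (n : ℕ) (hn : 2 ≤ n) (e : ℕ → ℕ) (he : IsInvSeq n e)
    (h0 : e (n - 1) = 0) :
    IsInvSeq n (fun k => if 1 ≤ k ∧ k < n then e (k - 1) + 1 else 0) ∧
    ascN n (fun k => if 1 ≤ k ∧ k < n then e (k - 1) + 1 else 0)
      = ascN (n - 1) e + 1 :=
  stmt12_general n hn e he
end

section
/- For n ≥ 2, the set D_n of n-inversion sequences with e_n ≠ 0 and no two consecutive zeros has cardinality equal to the number of derangements of {1,...,n}, which satisfies |D_n| = n·|D_{n−1}| + (−1)^n. -/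
/-- The Finset `D_n` of derangement inversion sequences: `n`-inversion sequences whose
last entry is nonzero and having no two consecutive zero entries. -/
def derangeSeqs (n : ℕ) : Finset (Fin n → ℕ) :=
  (invSeqs n).filter
    (fun e => ext e (n - 1) ≠ 0 ∧ ∀ i < n - 1, ¬(ext e i = 0 ∧ ext e (i + 1) = 0))

/-!
Deleting the last entry of a sequence in `D_{m+1}` leaves an `m`-inversion sequence without two
consecutive zeros, and the deleted entry is any of `1, …, m`; so `|D_{m+1}| = m · c_m`, where `c_m`
counts the `m`-inversion sequences without two consecutive zeros. Such a sequence either ends in a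
nonzero entry, and then lies in `D_m`, or ends in `0`, and then deleting that `0` gives an element
of `D_{m-1}`; so `c_m = |D_m| + |D_{m-1}|`. Hence `|D_{m+2}| = (m+1)(|D_m| + |D_{m+1}|)`, the
recurrence of the derangement numbers, with the same initial values `|D_1| = 0`, `|D_2| = 1`.
-/

def NoConsecZeros (n : ℕ) (a : ℕ → ℕ) : Prop :=
  ∀ i < n - 1, ¬(a i = 0 ∧ a (i + 1) = 0)

instance (n : ℕ) : DecidablePred (NoConsecZeros n) :=
  fun a => inferInstanceAs (Decidable (∀ i < n - 1, ¬(a i = 0 ∧ a (i + 1) = 0)))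

def noConsecZeroSeqs (n : ℕ) : Finset (Fin n → ℕ) :=
  (invSeqs n).filter (fun e => NoConsecZeros n (ext e))

lemma mem_derangeSeqs {n : ℕ} {e : Fin n → ℕ} :
    e ∈ derangeSeqs n ↔ e ∈ invSeqs n ∧ ext e (n - 1) ≠ 0 ∧ NoConsecZeros n (ext e) := by
  unfold derangeSeqs; exact Finset.mem_filter

lemma mem_noConsecZeroSeqs {n : ℕ} {e : Fin n → ℕ} :
    e ∈ noConsecZeroSeqs n ↔ e ∈ invSeqs n ∧ NoConsecZeros n (ext e) := by
  unfold noConsecZeroSeqs; exact Finset.mem_filter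

lemma noConsecZeros_congr {n : ℕ} {a b : ℕ → ℕ} (h : ∀ i < n, a i = b i) :
    NoConsecZeros n a ↔ NoConsecZeros n b := by
  refine forall₂_congr fun i hi => ?_
  rw [h i (by omega), h (i + 1) (by omega)]

lemma noConsecZeros_add_two_iff {m : ℕ} {a : ℕ → ℕ} :
    NoConsecZeros (m + 2) a ↔ NoConsecZeros (m + 1) a ∧ ¬(a m = 0 ∧ a (m + 1) = 0) := by
  show (∀ i < m + 1, _) ↔ (∀ i < m, _) ∧ _
  simp only [Nat.lt_succ_iff_lt_or_eq, or_imp, forall_and, forall_eq]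

lemma ext_snoc {m : ℕ} (f : Fin m → ℕ) (x : ℕ) :
    ext (Fin.snoc f x : Fin (m + 1) → ℕ) = Function.update (ext f) m x := by
  funext i
  rcases lt_trichotomy i m with hi | rfl | hi
  · simp [ext, Fin.snoc, hi, hi.ne, Nat.lt_succ_of_lt hi]
  · simp [ext, Fin.snoc]
  · simp [ext, hi.ne', hi.not_gt, Nat.lt_succ_iff.not.2 hi.not_ge]

lemma snoc_mem_invSeqs {m : ℕ} {f : Fin m → ℕ} {x : ℕ} :
    (Fin.snoc f x : Fin (m + 1) → ℕ) ∈ invSeqs (m + 1) ↔ f ∈ invSeqs m ∧ x ≤ m := by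
  simp [invSeqs, Fin.forall_fin_succ']

lemma snoc_mem_derangeSeqs {m : ℕ} {f : Fin m → ℕ} {x : ℕ} :
    (Fin.snoc f x : Fin (m + 1) → ℕ) ∈ derangeSeqs (m + 1) ↔
      x ∈ Finset.Icc 1 m ∧ f ∈ noConsecZeroSeqs m := by
  rw [mem_derangeSeqs, snoc_mem_invSeqs, mem_noConsecZeroSeqs, Finset.mem_Icc, ext_snoc,
    Nat.add_sub_cancel, Function.update_self, Nat.one_le_iff_ne_zero]
  rcases m with _ | k
  · simp only [Nat.le_zero]
    tauto
  · have hf : NoConsecZeros (k + 1) (Function.update (ext f) (k + 1) x) ↔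
        NoConsecZeros (k + 1) (ext f) :=
      noConsecZeros_congr fun i hi => Function.update_of_ne hi.ne _ _
    rw [noConsecZeros_add_two_iff, hf, Function.update_self]
    tauto

lemma snoc_zero_mem_noConsecZeroSeqs {k : ℕ} {f : Fin (k + 1) → ℕ} :
    (Fin.snoc f 0 : Fin (k + 2) → ℕ) ∈ noConsecZeroSeqs (k + 2) ↔ f ∈ derangeSeqs (k + 1) := by
  have hf : NoConsecZeros (k + 1) (Function.update (ext f) (k + 1) 0) ↔
      NoConsecZeros (k + 1) (ext f) :=
    noConsecZeros_congr fun i hi => Function.update_of_ne hi.ne _ _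
  rw [mem_noConsecZeroSeqs, snoc_mem_invSeqs, mem_derangeSeqs, ext_snoc, noConsecZeros_add_two_iff,
    hf, Function.update_self, Function.update_of_ne (Nat.lt_succ_self k).ne, Nat.add_sub_cancel]
  simp only [zero_le, and_true]
  tauto

lemma card_derangeSeqs_succ (m : ℕ) :
    (derangeSeqs (m + 1)).card = m * (noConsecZeroSeqs m).card := by
  calc (derangeSeqs (m + 1)).card = (Finset.Icc 1 m ×ˢ noConsecZeroSeqs m).card :=
        (Finset.card_equiv (Fin.snocEquiv fun _ => ℕ) fun _ =>
          Finset.mem_product.trans snoc_mem_derangeSeqs.symm).symm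
    _ = m * (noConsecZeroSeqs m).card := by
        rw [Finset.card_product, Nat.card_Icc, Nat.add_sub_cancel]

lemma card_noConsecZeroSeqs_add_two (k : ℕ) :
    (noConsecZeroSeqs (k + 2)).card = (derangeSeqs (k + 2)).card + (derangeSeqs (k + 1)).card := by
  have h_ne :
      (noConsecZeroSeqs (k + 2)).filter (fun e => ext e (k + 1) ≠ 0) = derangeSeqs (k + 2) := by
    ext e
    rw [Finset.mem_filter, mem_noConsecZeroSeqs, mem_derangeSeqs]
    tauto
  have h_eq : ((noConsecZeroSeqs (k + 2)).filter (fun e => ¬ext e (k + 1) ≠ 0)).card =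
      ({0} ×ˢ derangeSeqs (k + 1)).card := by
    refine (Finset.card_equiv (Fin.snocEquiv fun _ => ℕ) fun ⟨x, f⟩ => ?_).symm
    change _ ↔ (Fin.snoc f x : Fin (k + 2) → ℕ) ∈ _
    rw [Finset.mem_product, Finset.mem_singleton, Finset.mem_filter, ext_snoc,
      Function.update_self, not_not]
    constructor
    · rintro ⟨rfl, hf⟩
      exact ⟨snoc_zero_mem_noConsecZeroSeqs.2 hf, rfl⟩
    · rintro ⟨hf, rfl⟩
      exact ⟨rfl, snoc_zero_mem_noConsecZeroSeqs.1 hf⟩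
  rw [← Finset.card_filter_add_card_filter_not (fun e => ext e (k + 1) ≠ 0), h_ne, h_eq,
    Finset.card_product, Finset.card_singleton, one_mul]

lemma card_derangeSeqs_add_three (k : ℕ) :
    (derangeSeqs (k + 3)).card =
      (k + 2) * ((derangeSeqs (k + 1)).card + (derangeSeqs (k + 2)).card) := by
  rw [card_derangeSeqs_succ, card_noConsecZeroSeqs_add_two, add_comm (derangeSeqs (k + 2)).card]

lemma card_derangeSeqs_eq_numDerangements {n : ℕ} (hn : 1 ≤ n) :
    (derangeSeqs n).card = numDerangements n := by
  suffices h : ∀ k, (derangeSeqs (k + 1)).card = numDerangements (k + 1) ∧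
      (derangeSeqs (k + 2)).card = numDerangements (k + 2) by
    obtain ⟨k, rfl⟩ := Nat.exists_eq_add_of_le' hn
    exact (h k).1
  intro k
  induction k with
  | zero =>
    refine ⟨by simp [card_derangeSeqs_succ], ?_⟩
    rw [card_derangeSeqs_succ]
    decide
  | succ k ih =>
    refine ⟨ih.2, ?_⟩
    rw [card_derangeSeqs_add_three, ih.1, ih.2, numDerangements_add_two (k + 1)]

/-- For `n ≥ 2`, `|D_n|` equals the number of derangements of `{1,...,n}`, and
satisfies `|D_n| = n·|D_{n-1}| + (-1)^n`. -/
theorem stmt14 (n : ℕ) (hn : 2 ≤ n) :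
    (derangeSeqs n).card
        = (Finset.univ.filter (fun σ : Equiv.Perm (Fin n) => ∀ i, σ i ≠ i)).card ∧
    ((derangeSeqs n).card : ℤ)
        = n * ((derangeSeqs (n - 1)).card : ℤ) + (-1) ^ n := by
  obtain ⟨k, rfl⟩ := Nat.exists_eq_add_of_le' hn
  refine ⟨?_, ?_⟩
  · rw [card_derangeSeqs_eq_numDerangements (by omega), ← card_derangements_fin_eq_numDerangements,
      ← Fintype.card_subtype]
    exact Fintype.card_congr (Equiv.refl _)
  · rw [show k + 2 - 1 = k + 1 by omega, card_derangeSeqs_eq_numDerangements (by omega),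
      card_derangeSeqs_eq_numDerangements (by omega), numDerangements_succ]
    push_cast
    ring
end

section
/- For a finite linearly ordered set E and a bijection σ : {1,...,n} → E with smallest descent i_1, the values σ(1) < σ(2) < ... < σ(i_1) are in increasing order and the set {σ(1),...,σ(i_1)} equals E_{≤ max S(σ,i_1)} \ (S(σ,i_1) \ {max S(σ,i_1)}), where S(σ,i_1) = { σ(j) : j ≥ i_1, σ(j) ≤ σ(i_1) }. -/
namespace sSet

variable {E : Type*} [LinearOrder E] {n : ℕ} {σ : Fin n → E} {i : Fin n}

theorem le_of_mem {x : E} (hx : x ∈ sSet σ i) : x ≤ σ i := by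
  obtain ⟨l, hl, rfl⟩ := Finset.mem_image.1 hx
  exact (Finset.mem_filter.1 hl).2.2

theorem self_mem : σ i ∈ sSet σ i :=
  Finset.mem_image_of_mem σ (by simp)

theorem apply_mem_iff (hσ : Function.Injective σ) {l : Fin n} :
    σ l ∈ sSet σ i ↔ i ≤ l ∧ σ l ≤ σ i := by
  simp [sSet, hσ.mem_finset_image]

end sSet

section

variable {E : Type*} [LinearOrder E] {n : ℕ} {σ : Fin n → E} {i : Fin n}

theorem strictMonoOn_Iic_of_forall_descent_ge (hσ : Function.Injective σ)
    (hmin : ∀ l : Fin n, ∀ hl : (l : ℕ) + 1 < n, σ ⟨(l : ℕ) + 1, hl⟩ < σ l → i ≤ l) :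
    StrictMonoOn σ (Set.Iic i) := by
  refine strictMonoOn_Iic_of_lt_succ fun m hm => ?_
  have hm1 : (m : ℕ) + 1 < n := by omega
  have hsucc : Order.succ m = ⟨(m : ℕ) + 1, hm1⟩ :=
    (Fin.covBy_iff.2 (Order.covBy_add_one (m : ℕ))).succ_eq
  rw [hsucc]
  exact lt_of_le_of_ne (not_lt.1 fun hdesc => (hmin m hm1 hdesc).not_gt hm)
    (hσ.ne (by simp [Fin.ext_iff]))

theorem image_Iic_eq_sdiff_erase_sSet [Fintype E] (hσ : Function.Bijective σ)
    (hmono : MonotoneOn σ (Set.Iic i)) :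
    Finset.image σ (Finset.univ.filter (fun l => l ≤ i))
      = (Finset.univ.filter (fun x => x ≤ σ i)) \ ((sSet σ i).erase (σ i)) := by
  ext x
  obtain ⟨l, rfl⟩ := hσ.2 x
  simp only [hσ.1.mem_finset_image, Finset.mem_filter, Finset.mem_univ, true_and,
    Finset.mem_sdiff, Finset.mem_erase, hσ.1.ne_iff, sSet.apply_mem_iff hσ.1]
  constructor
  · intro hl
    exact ⟨hmono hl (le_refl i) hl, fun h => h.1 (le_antisymm hl h.2.1)⟩
  · rintro ⟨hle, hnot⟩
    by_contra hl
    exact hnot ⟨(not_le.1 hl).ne', (not_le.1 hl).le, hle⟩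

end

theorem stmt16_general {E : Type*} [Fintype E] [LinearOrder E] {n : ℕ}
    (σ : Fin n → E) (hσ : Function.Bijective σ)
    (i : Fin n)
    (hmin : ∀ l : Fin n, ∀ hl : (l : ℕ) + 1 < n, σ ⟨(l : ℕ) + 1, hl⟩ < σ l → i ≤ l) :
    (∀ l l' : Fin n, l < l' → l' ≤ i → σ l < σ l') ∧
    (σ i ∈ sSet σ i ∧ ∀ x ∈ sSet σ i, x ≤ σ i) ∧
    Finset.image σ (Finset.univ.filter (fun l => l ≤ i))
      = (Finset.univ.filter (fun x => x ≤ σ i)) \ ((sSet σ i).erase (σ i)) := by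
  have hmono := strictMonoOn_Iic_of_forall_descent_ge hσ.1 hmin
  refine ⟨fun l l' hll' hl'i => hmono (hll'.le.trans hl'i) hl'i hll',
    ⟨sSet.self_mem, fun _ => sSet.le_of_mem⟩, ?_⟩
  exact image_Iic_eq_sdiff_erase_sSet hσ hmono.monotoneOn

/-- If `i` is the smallest descent of a bijection `σ : Fin n → E`, then the values of
`σ` at positions `≤ i` are increasing, `σ i = max S(σ,i)`, and the set of these values
is `E_{≤ max S(σ,i)} \ (S(σ,i) \ {max S(σ,i)})`. -/
theorem stmt16 {E : Type*} [Fintype E] [LinearOrder E] {n : ℕ}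
    (σ : Fin n → E) (hσ : Function.Bijective σ)
    (i : Fin n) (hi : (i : ℕ) + 1 < n) (hdi : σ ⟨(i : ℕ) + 1, hi⟩ < σ i)
    (hmin : ∀ l : Fin n, ∀ hl : (l : ℕ) + 1 < n, σ ⟨(l : ℕ) + 1, hl⟩ < σ l → i ≤ l) :
    (∀ l l' : Fin n, l < l' → l' ≤ i → σ l < σ l') ∧
    (σ i ∈ sSet σ i ∧ ∀ x ∈ sSet σ i, x ≤ σ i) ∧
    Finset.image σ (Finset.univ.filter (fun l => l ≤ i))
      = (Finset.univ.filter (fun x => x ≤ σ i)) \ ((sSet σ i).erase (σ i)) :=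
  stmt16_general σ hσ i hmin
end
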